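/- arXiv:2501.02695 — 2 statements merged into one kernel-verified Lean document; each statement's English description precedes it below -/
import Mathlib

section
/- For every ε > 0 there exists a constant C > 0 such that for all N ∈ ℕ and all A ⊆ [N] with distinct subset products, there exists A' ⊆ A with |A \ A'| ≤ C·N^{1/3+ε} such that the map a ↦ (v_p(a))_{p prime, N^{1/3} < p ≤ N} is injective on A', and every a ∈ A' is divisible by at least one prime p with N^{1/3} < p ≤ N. -/
/-- A set of positive integers has *distinct subset products* if any two distinct
finite subsets have distinct products (the empty product is `1`). -/
def DistinctSubsetProds (A : Set ℕ) : Prop :=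
  ∀ B C : Finset ℕ, ↑B ⊆ A → ↑C ⊆ A → ∏ b ∈ B, b = ∏ c ∈ C, c → B = C

/-!
Put `y = ⌊N^{1/3}⌋` and split every factorization into its `y`-smooth and `y`-rough parts.
Let `X ⊆ A` consist of the elements whose rough part is trivial or shared with another
element of `A`. A subset `B ⊆ X` is determined by `∏ B`, hence by the rough part of `∏ B`,
which depends only on how many elements `B` takes from each fibre of `a ↦ rough part` over a
nonzero value, together with the exponents in `∏ B` of the at most `y + 1` small primes,
each at most `|X| log₂ N`. Each of those fibres has at least two elements, and
`(m + 1)^5 ≤ 16^m` for `m ≥ 2` bounds the number of fibre-count profiles by `2^{4|X|/5}`.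
Hence `2^{|X|} ≤ (|X| log₂ N + 1)^{5(y+1)} ≤ N^{10(y+1)}`, so `|X| = O(N^{1/3} log N)`.
-/

open Finset

section FiberCounting

variable {α β : Type*} [DecidableEq β]

theorem two_pow_card_le_prod_card_fiber_succ_mul_card {γ : Type*} (X : Finset α) (f : α → β)
    (I : Finset β) (s : Finset α → γ) (S : Finset γ) (hS : ∀ B ⊆ X, s B ∈ S)
    (hinj : ∀ B ⊆ X, ∀ C ⊆ X, (∀ v ∈ I, #{b ∈ B | f b = v} = #{c ∈ C | f c = v}) →
      s B = s C → B = C) :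
    2 ^ #X ≤ (∏ v ∈ I, (#{a ∈ X | f a = v} + 1)) * #S := by
  let φ : Finset α → ((v : β) → v ∈ I → ℕ) × γ := fun B => (fun v _ => #{b ∈ B | f b = v}, s B)
  have hmaps : ∀ B ∈ X.powerset, φ B ∈ (I.pi fun v => range (#{a ∈ X | f a = v} + 1)) ×ˢ S := by
    intro B hB
    rw [mem_powerset] at hB
    exact mem_product.2 ⟨mem_pi.2 fun v _ =>
      mem_range_succ_iff.2 (card_le_card (filter_subset_filter _ hB)), hS B hB⟩
  have hφ : Set.InjOn φ X.powerset := by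
    intro B hB C hC h
    rw [mem_coe, mem_powerset] at hB hC
    obtain ⟨hcount, hs⟩ := Prod.ext_iff.1 h
    exact hinj B hB C hC (fun v hv => congrFun (congrFun hcount v) hv) hs
  simpa [card_product, card_pi] using card_le_card_of_injOn φ hmaps hφ

theorem succ_pow_five_le_sixteen_pow {m : ℕ} (hm : 2 ≤ m) : (m + 1) ^ 5 ≤ 16 ^ m := by
  induction m, hm using Nat.le_induction with
  | base => norm_num
  | succ n hn ih =>
    have h := Nat.pow_le_pow_left (show 2 * (n + 2) ≤ 3 * (n + 1) by omega) 5
    rw [mul_pow, mul_pow] at h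
    calc (n + 2) ^ 5 ≤ 16 * (n + 1) ^ 5 := by norm_num at h; omega
      _ ≤ 16 ^ (n + 1) := by rw [pow_succ' 16 n]; exact Nat.mul_le_mul_left 16 ih

theorem prod_card_fiber_succ_pow_five_le (X : Finset α) (f : α → β) (I : Finset β)
    (hI : ∀ v ∈ I, 2 ≤ #{a ∈ X | f a = v}) :
    (∏ v ∈ I, (#{a ∈ X | f a = v} + 1)) ^ 5 ≤ 16 ^ #X :=
  calc (∏ v ∈ I, (#{a ∈ X | f a = v} + 1)) ^ 5
      = ∏ v ∈ I, (#{a ∈ X | f a = v} + 1) ^ 5 := (prod_pow ..).symm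
    _ ≤ ∏ v ∈ I, 16 ^ #{a ∈ X | f a = v} :=
      prod_le_prod' fun v hv => succ_pow_five_le_sixteen_pow (hI v hv)
    _ = 16 ^ #{a ∈ X | f a ∈ I} := by rw [prod_pow_eq_pow_sum, sum_card_fiberwise_eq_card_filter]
    _ ≤ 16 ^ #X := Nat.pow_le_pow_right (by norm_num) (card_filter_le _ _)

theorem sum_eq_sum_card_filter_smul {M : Type*} [AddCommMonoid M] [DecidableEq M] (s : Finset α)
    (F : α → M) (I : Finset M) (hI : ∀ a ∈ s, F a ≠ 0 → F a ∈ I) :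
    ∑ a ∈ s, F a = ∑ v ∈ I, #{a ∈ s | F a = v} • v := by
  rw [← sum_filter_of_ne (p := (F · ∈ I)) hI, ← sum_fiberwise_eq_sum_filter' s I F fun v => v]
  simp only [sum_const]

end FiberCounting

namespace Nat

def smoothFactorization (y n : ℕ) : ℕ →₀ ℕ := n.factorization.filter (· ≤ y)

def roughFactorization (y n : ℕ) : ℕ →₀ ℕ := n.factorization.filter (y < ·)

variable {y : ℕ}

theorem smoothFactorization_add_roughFactorization (n : ℕ) :
    smoothFactorization y n + roughFactorization y n = n.factorization := by
  ext p
  simp only [Finsupp.add_apply, smoothFactorization, roughFactorization, Finsupp.filter_apply]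
  split_ifs <;> omega

theorem roughFactorization_prod {B : Finset ℕ} (hB : ∀ b ∈ B, b ≠ 0) :
    roughFactorization y (∏ b ∈ B, b) = ∑ b ∈ B, roughFactorization y b := by
  rw [roughFactorization, factorization_prod hB, Finsupp.filter_sum]
  rfl

theorem factorization_le_log_two (n p : ℕ) : n.factorization p ≤ Nat.log 2 n := by
  by_cases hp : p.Prime
  · rw [factorization_def n hp]
    exact (padicValNat_le_nat_log n).trans (log_anti_left one_lt_two hp.two_le)
  · simp [factorization_eq_zero_of_not_prime n hp]

theorem smoothFactorization_prod_mem_finsupp {N : ℕ} {X B : Finset ℕ} (hX : ↑X ⊆ Set.Icc 1 N)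
    (hB : B ⊆ X) :
    smoothFactorization y (∏ b ∈ B, b) ∈
      (range (y + 1)).finsupp fun _ => range (#X * Nat.log 2 N + 1) := by
  refine mem_finsupp_iff.2 ⟨fun p hp => ?_, fun p _ => mem_range_succ_iff.2 ?_⟩
  · rw [smoothFactorization, Finsupp.support_filter, mem_filter] at hp
    exact mem_range_succ_iff.2 hp.2
  · have hpos : ∀ b ∈ B, b ≠ 0 := fun b hb => (one_le_iff_ne_zero.1 (hX (hB hb)).1)
    calc smoothFactorization y (∏ b ∈ B, b) p ≤ (∏ b ∈ B, b).factorization p := by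
          rw [smoothFactorization, Finsupp.filter_apply]; split_ifs <;> simp
      _ = ∑ b ∈ B, b.factorization p := by
          rw [factorization_prod hpos, Finsupp.finsetSum_apply]
      _ ≤ ∑ b ∈ B, Nat.log 2 N := sum_le_sum fun b hb =>
          (factorization_le_log_two b p).trans (log_mono_right (hX (hB hb)).2)
      _ ≤ #X * Nat.log 2 N := by rw [sum_const, smul_eq_mul]; gcongr

theorem roughFactorization_eq_of_padicValNat_eq {N a b : ℕ} (ha : a ≤ N) (hb : b ≤ N)
    (h : ∀ p : ℕ, p.Prime → y < p → p ≤ N → padicValNat p a = padicValNat p b) :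
    roughFactorization y a = roughFactorization y b := by
  ext p
  simp only [roughFactorization, Finsupp.filter_apply]
  split_ifs with hyp
  · by_cases hp : p.Prime
    · by_cases hpN : p ≤ N
      · rw [factorization_def a hp, factorization_def b hp]
        exact h p hp hyp hpN
      · rw [factorization_eq_zero_of_lt (by omega), factorization_eq_zero_of_lt (by omega)]
    · simp [factorization_eq_zero_of_not_prime _ hp]
  · rfl

theorem exists_prime_dvd_of_roughFactorization_ne_zero {a : ℕ}
    (h : roughFactorization y a ≠ 0) : ∃ p, p.Prime ∧ y < p ∧ p ≤ a ∧ p ∣ a := by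
  obtain ⟨p, hp⟩ := Finsupp.support_nonempty_iff.2 h
  rw [roughFactorization, Finsupp.support_filter, mem_filter, support_factorization,
    mem_primeFactors] at hp
  obtain ⟨⟨hp, hpa, ha⟩, hyp⟩ := hp
  exact ⟨p, hp, hyp, le_of_dvd (pos_of_ne_zero ha) hpa, hpa⟩

end Nat

open Nat

theorem DistinctSubsetProds.mono {A X : Set ℕ} (hA : DistinctSubsetProds A) (hXA : X ⊆ A) :
    DistinctSubsetProds X :=
  fun B C hB hC => hA B C (hB.trans hXA) (hC.trans hXA)

theorem DistinctSubsetProds.two_pow_card_le {y N : ℕ} {X : Finset ℕ}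
    (hD : DistinctSubsetProds X) (hX : ↑X ⊆ Set.Icc 1 N) :
    2 ^ #X ≤ (∏ v ∈ (X.image (roughFactorization y)).erase 0,
        (#{a ∈ X | roughFactorization y a = v} + 1)) * (#X * Nat.log 2 N + 1) ^ (y + 1) := by
  set I := (X.image (roughFactorization y)).erase 0
  have hpos : ∀ D ⊆ X, ∀ d ∈ D, d ≠ 0 := fun D hD d hd => one_le_iff_ne_zero.1 (hX (hD hd)).1
  have hrough : ∀ D ⊆ X, roughFactorization y (∏ d ∈ D, d) =
      ∑ v ∈ I, #{d ∈ D | roughFactorization y d = v} • v := fun D hD => by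
    rw [roughFactorization_prod (hpos D hD)]
    exact sum_eq_sum_card_filter_smul D _ I fun d hd hne =>
      mem_erase.2 ⟨hne, mem_image_of_mem _ (hD hd)⟩
  have key := two_pow_card_le_prod_card_fiber_succ_mul_card X (roughFactorization y) I
    (fun B => smoothFactorization y (∏ b ∈ B, b)) _
    (fun B hB => smoothFactorization_prod_mem_finsupp hX hB) fun B hB C hC hcount hsmooth => by
      refine hD B C (coe_subset.2 hB) (coe_subset.2 hC) (factorization_inj ?_ ?_ ?_)
      · exact prod_ne_zero_iff.2 (hpos B hB)
      · exact prod_ne_zero_iff.2 (hpos C hC)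
      · rw [← smoothFactorization_add_roughFactorization,
          ← smoothFactorization_add_roughFactorization, hsmooth, hrough B hB, hrough C hC]
        exact congrArg _ (sum_congr rfl fun v hv => by rw [hcount v hv])
  simpa [card_finsupp] using key

def roughIsolated (y : ℕ) (A : Finset ℕ) : Finset ℕ :=
  {a ∈ A | roughFactorization y a ≠ 0 ∧
    ∀ b ∈ A, roughFactorization y b = roughFactorization y a → b = a}

theorem two_le_card_fiber_sdiff_roughIsolated {y : ℕ} {A : Finset ℕ} {v : ℕ →₀ ℕ}
    (hv : v ∈ ((A \ roughIsolated y A).image (roughFactorization y)).erase 0) :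
    2 ≤ #{a ∈ A \ roughIsolated y A | roughFactorization y a = v} := by
  obtain ⟨hv0, hv⟩ := mem_erase.1 hv
  obtain ⟨a, ha, rfl⟩ := mem_image.1 hv
  obtain ⟨haA, haI⟩ := mem_sdiff.1 ha
  obtain ⟨b, hbA, hba, hne⟩ : ∃ b ∈ A, roughFactorization y b = roughFactorization y a ∧ b ≠ a := by
    simpa [roughIsolated, haA, hv0] using haI
  have hbI : b ∉ roughIsolated y A := fun hb =>
    hne.symm ((mem_filter.1 hb).2.2 a haA hba.symm)
  exact one_lt_card.2 ⟨a, by simp [ha], b, by simp [hbA, hbI, hba], hne.symm⟩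

theorem DistinctSubsetProds.two_pow_card_sdiff_roughIsolated_le {y N : ℕ} {A : Finset ℕ}
    (hD : DistinctSubsetProds A) (hA : ↑A ⊆ Set.Icc 1 N) :
    2 ^ #(A \ roughIsolated y A) ≤
      (#(A \ roughIsolated y A) * Nat.log 2 N + 1) ^ (5 * (y + 1)) := by
  set X := A \ roughIsolated y A
  have hXA : ↑X ⊆ (↑A : Set ℕ) := coe_subset.2 sdiff_subset
  have hcount := (hD.mono hXA).two_pow_card_le (y := y) (hXA.trans hA)
  have hfib := prod_card_fiber_succ_pow_five_le X _ _ fun v hv =>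
    two_le_card_fiber_sdiff_roughIsolated hv
  have : 16 ^ #X * 2 ^ #X ≤ 16 ^ #X * ((#X * Nat.log 2 N + 1) ^ (y + 1)) ^ 5 :=
    calc 16 ^ #X * 2 ^ #X = (2 ^ #X) ^ 5 := by
          rw [show (16 : ℕ) = 2 ^ 4 from rfl, ← pow_mul, ← pow_add, ← pow_mul]; ring_nf
      _ ≤ _ := Nat.pow_le_pow_left hcount 5
      _ ≤ _ := by rw [mul_pow]; exact Nat.mul_le_mul_right _ hfib
  rw [mul_comm 5, pow_mul]
  exact Nat.le_of_mul_le_mul_left this (by positivity)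

theorem le_mul_rpow_of_two_pow_le {ε : ℝ} (hε : 0 < ε) {T N : ℕ} (hTN : T ≤ N)
    (h : 2 ^ T ≤ (T * Nat.log 2 N + 1) ^ (5 * (⌊(N : ℝ) ^ ((1 : ℝ) / 3)⌋₊ + 1))) :
    (T : ℝ) ≤ 20 / (ε * Real.log 2) * (N : ℝ) ^ ((1 : ℝ) / 3 + ε) := by
  rcases Nat.eq_zero_or_pos N with rfl | hN
  · rw [Nat.cast_zero, Real.zero_rpow (by positivity)]
    simp [Nat.le_zero.1 hTN]
  set y := ⌊(N : ℝ) ^ ((1 : ℝ) / 3)⌋₊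
  have hbase : T * Nat.log 2 N + 1 ≤ N ^ 2 := by
    have := Nat.log_lt_self 2 hN.ne'
    nlinarith
  have hpow : (2 : ℝ) ^ T ≤ (N : ℝ) ^ (10 * (y + 1)) := by
    exact_mod_cast h.trans ((Nat.pow_le_pow_left hbase _).trans_eq (by ring))
  have hlog : (T : ℝ) * Real.log 2 ≤ 10 * (y + 1) * Real.log N := by
    have := Real.log_le_log (by positivity) hpow
    rw [Real.log_pow, Real.log_pow] at this
    exact_mod_cast this
  have hN1 : (1 : ℝ) ≤ N := by exact_mod_cast hN
  have hy : (y : ℝ) + 1 ≤ 2 * (N : ℝ) ^ ((1 : ℝ) / 3) := by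
    have := Nat.floor_le (Real.rpow_nonneg (Nat.cast_nonneg N) ((1 : ℝ) / 3))
    linarith [Real.one_le_rpow hN1 (by norm_num : (0 : ℝ) ≤ 1 / 3)]
  have hlogN := Real.log_le_rpow_div (Nat.cast_nonneg N) hε
  rw [Real.rpow_add (by positivity), div_mul_eq_mul_div, le_div_iff₀ (by positivity)]
  calc (T : ℝ) * (ε * Real.log 2) = ε * (T * Real.log 2) := by ring
    _ ≤ ε * (10 * (2 * (N : ℝ) ^ ((1 : ℝ) / 3)) * ((N : ℝ) ^ ε / ε)) := by
      exact mul_le_mul_of_nonneg_left (hlog.trans (by gcongr)) hε.le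
    _ = 20 * ((N : ℝ) ^ ((1 : ℝ) / 3) * (N : ℝ) ^ ε) := by field_simp; ring

/-- For `A ⊆ [N]` with distinct subset products, one can remove `C·N^{1/3+ε}` elements of
`A` to obtain `A' ⊆ A` on which the tuple of valuations at primes in `(N^{1/3}, N]` is
injective, and such that every element of `A'` is divisible by some prime in
`(N^{1/3}, N]`. -/
theorem stmt8 : ∀ ε : ℝ, 0 < ε → ∃ C : ℝ, 0 < C ∧ ∀ N : ℕ, ∀ A : Finset ℕ,
    ↑A ⊆ Set.Icc 1 N → DistinctSubsetProds ↑A →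
    ∃ A' : Finset ℕ, A' ⊆ A ∧ ((A \ A').card : ℝ) ≤ C * (N : ℝ) ^ ((1 : ℝ) / 3 + ε) ∧
      (∀ a ∈ A', ∀ b ∈ A', (∀ p : ℕ, p.Prime → (N : ℝ) ^ ((1 : ℝ) / 3) < (p : ℝ) → p ≤ N →
        padicValNat p a = padicValNat p b) → a = b) ∧
      ∀ a ∈ A', ∃ p : ℕ, p.Prime ∧ (N : ℝ) ^ ((1 : ℝ) / 3) < (p : ℝ) ∧ p ≤ N ∧ p ∣ a := by
  intro ε hε
  refine ⟨20 / (ε * Real.log 2), by positivity, fun N A hA hD => ?_⟩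
  set y := ⌊(N : ℝ) ^ ((1 : ℝ) / 3)⌋₊
  have hy : ∀ p : ℕ, y < p ↔ (N : ℝ) ^ ((1 : ℝ) / 3) < p :=
    fun p => Nat.floor_lt (Real.rpow_nonneg (Nat.cast_nonneg N) _)
  have hAN : #(A \ roughIsolated y A) ≤ N := by
    have : A ⊆ Icc 1 N := fun a ha => mem_Icc.2 (hA ha)
    simpa using card_le_card (sdiff_subset.trans this)
  refine ⟨roughIsolated y A, filter_subset _ _,
    le_mul_rpow_of_two_pow_le hε hAN (hD.two_pow_card_sdiff_roughIsolated_le hA), ?_, ?_⟩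
  · intro a ha b hb hval
    obtain ⟨haA, -⟩ := mem_filter.1 ha
    obtain ⟨hbA, -, hb⟩ := mem_filter.1 hb
    exact hb a haA (roughFactorization_eq_of_padicValNat_eq (hA haA).2 (hA hbA).2
      fun p hp hyp hpN => hval p hp ((hy p).1 hyp) hpN)
  · intro a ha
    obtain ⟨haA, ha, -⟩ := mem_filter.1 ha
    obtain ⟨p, hp, hyp, hpa, hpd⟩ := exists_prime_dvd_of_roughFactorization_ne_zero ha
    exact ⟨p, hp, (hy p).1 hyp, hpa.trans (hA haA).2, hpd⟩
end

section
/- For every ε > 0 there exists a constant C > 0 with the following property. Let N ∈ ℕ and let A ⊆ [N] have distinct subset products, such that the map a ↦ (v_p(a))_{p prime, N^{1/3} < p ≤ N} is injective on A and every a ∈ A is divisible by some prime in (N^{1/3}, N]. If C_1, …, C_n are the edge sets of pairwise edge-disjoint circuits in the prime factorization graph G(A), each of even length at most 2·N^{1/12}, then n ≤ C·N^{1/3+ε}. -/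
/-- `PLM N p` : `p` is a prime in `(N^{1/3}, N]` (a "large or medium" prime). -/
def PLM (N : ℕ) (p : ℕ) : Prop :=
  p.Prime ∧ (N : ℝ) ^ ((1 : ℝ) / 3) < (p : ℝ) ∧ p ≤ N

/-- The *prime factorization graph* of `A ⊆ [N]`: the vertices are the natural numbers
(only `1` and the primes in `(N^{1/3}, N]` can fail to be isolated); `1` is joined to a
prime `p ∈ (N^{1/3}, N]` if some `a ∈ A` has `v_p(a) = 1` and `v_q(a) = 0` for every
other prime `q ∈ (N^{1/3}, N]`; two distinct primes `p, q ∈ (N^{1/3}, N]` are joined if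
some `a ∈ A` is divisible by both. -/
def pfGraph (N : ℕ) (A : Finset ℕ) : SimpleGraph ℕ where
  Adj x y := x ≠ y ∧
    ((x = 1 ∧ PLM N y ∧ ∃ a ∈ A, padicValNat y a = 1 ∧
        ∀ q, PLM N q → q ≠ y → padicValNat q a = 0) ∨
     (y = 1 ∧ PLM N x ∧ ∃ a ∈ A, padicValNat x a = 1 ∧
        ∀ q, PLM N q → q ≠ x → padicValNat q a = 0) ∨
     (PLM N x ∧ PLM N y ∧ ∃ a ∈ A, x ∣ a ∧ y ∣ a))
  symm := by
    constructor
    intro x y ⟨hne, h⟩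
    refine ⟨hne.symm, ?_⟩
    rcases h with h | h | ⟨hx, hy, a, ha, hxa, hya⟩
    · exact Or.inr (Or.inl h)
    · exact Or.inl h
    · exact Or.inr (Or.inr ⟨hy, hx, a, ha, hya, hxa⟩)
  loopless := ⟨fun x h => h.1 rfl⟩

/-- The list of edges of the closed walk determined by the vertex list `l`. -/
def circuitEdgeList {V : Type*} (l : List V) : List (Sym2 V) :=
  (l.zip (l.rotate 1)).map fun p => s(p.1, p.2)

/-- `E` is the edge set of a circuit of length `k` in `G` : there are (not necessarily
distinct) vertices `v_1, …, v_k` such that the `k` edges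
`{v_1,v_2}, {v_2,v_3}, …, {v_k,v_1}` all lie in `G`, are pairwise distinct, and make up
`E`. -/
def IsCircuit {V : Type*} (G : SimpleGraph V) (k : ℕ) (E : Set (Sym2 V)) : Prop :=
  ∃ l : List V, l.length = k ∧ l ≠ [] ∧
    (∀ p ∈ l.zip (l.rotate 1), G.Adj p.1 p.2) ∧
    (circuitEdgeList l).Nodup ∧
    E = {e | e ∈ circuitEdgeList l}

/-- `E` is the edge set of a cycle of length `k` in `G` : as for a circuit, but the
vertices `v_1, …, v_k` are pairwise distinct. -/
def IsCycle {V : Type*} (G : SimpleGraph V) (k : ℕ) (E : Set (Sym2 V)) : Prop :=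
  ∃ l : List V, l.length = k ∧ l ≠ [] ∧ l.Nodup ∧
    (∀ p ∈ l.zip (l.rotate 1), G.Adj p.1 p.2) ∧
    (circuitEdgeList l).Nodup ∧
    E = {e | e ∈ circuitEdgeList l}

/-!
Label every edge of `G(A)` by an element of `A` realising it. Since `A ⊆ [N]` and any three primes
above `N^{1/3}` have product exceeding `N`, the valuations of the label at the primes in
`(N^{1/3}, N]` are exactly the incidences of the edge, so distinct edges get distinct labels.
Splitting an even circuit into its edges at even and at odd positions gives two disjoint sets of
labels whose products have equal valuation at every prime above `N^{1/3}`: each vertex meets both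
halves equally often. Choosing one half from each of the `n` circuits yields `2^n` distinct subset
products of `A` which agree at all primes above `N^{1/3}` and have valuations at most `N²` at the
others, so `2^n ≤ (N² + 1)^{N^{1/3}}`, i.e. `n ≪ N^{1/3} log N`.
-/

open Finset Function

section Circuit

variable {V : Type*} (l : List V)

lemma val_finRotate {n : ℕ} (i : Fin n) : (finRotate n i : ℕ) = (i + 1) % n := by
  have := i.neZero
  rw [finRotate_apply, Fin.val_add, Fin.val_one', Nat.add_mod_mod]

def circuitEdge (j : Fin l.length) : Sym2 V := s(l[j], l[finRotate _ j])

lemma circuitEdgeList_eq_ofFn : circuitEdgeList l = List.ofFn (circuitEdge l) := by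
  apply List.ext_getElem (by simp [circuitEdgeList])
  intro j h₁ h₂
  simp only [circuitEdgeList, circuitEdge, List.getElem_map, List.getElem_zip,
    List.getElem_rotate, List.getElem_ofFn]
  congr 2
  exact (val_finRotate ⟨j, by simpa [circuitEdgeList] using h₁⟩).symm

lemma circuitEdge_mem_circuitEdgeList (j : Fin l.length) :
    circuitEdge l j ∈ circuitEdgeList l := by
  rw [circuitEdgeList_eq_ofFn]
  exact List.mem_ofFn.mpr ⟨j, rfl⟩

variable {l}

lemma mem_edgeSet_of_mem_circuitEdgeList {G : SimpleGraph V}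
    (hadj : ∀ p ∈ l.zip (l.rotate 1), G.Adj p.1 p.2) {e : Sym2 V}
    (he : e ∈ circuitEdgeList l) : e ∈ G.edgeSet := by
  obtain ⟨p, hp, rfl⟩ := List.mem_map.mp he
  exact hadj p hp

lemma sum_filter_even_finRotate {M : Type*} [AddCommMonoid M] (hl : Even l.length)
    (f : Fin l.length → M) (b : Bool) :
    ∑ j : Fin l.length with (Even j.val ↔ b), f (finRotate _ j) =
      ∑ j : Fin l.length with ¬(Even j.val ↔ b), f j := by
  rw [sum_filter, sum_filter,
    ← Equiv.sum_comp (finRotate _) fun j => if ¬(Even j.val ↔ b) then f j else 0]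
  refine sum_congr rfl fun j _ => ?_
  have : Even ((j.val + 1) % l.length) ↔ Even (j.val + 1) := by
    rw [Nat.even_iff, Nat.even_iff, Nat.mod_mod_of_dvd _ (even_iff_two_dvd.mp hl)]
  simp only [val_finRotate, this, Nat.even_add_one]
  cases b <;> simp

variable (l) in
/-- `b = true` selects the edges at even positions of the closed walk `l`, `b = false` those at
odd positions. -/
def circuitHalf [DecidableEq V] (b : Bool) : Finset (Sym2 V) :=
  ({j : Fin l.length | Even j.val ↔ b} : Finset _).image (circuitEdge l)

variable [DecidableEq V]

lemma mem_circuitEdgeList_of_mem_circuitHalf {b : Bool} {e : Sym2 V}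
    (he : e ∈ circuitHalf l b) : e ∈ circuitEdgeList l := by
  obtain ⟨j, -, rfl⟩ := mem_image.mp he
  exact circuitEdge_mem_circuitEdgeList l j

lemma circuitHalf_true_nonempty (hl : l ≠ []) : (circuitHalf l true).Nonempty :=
  ⟨_, mem_image_of_mem _
    (mem_filter.mpr ⟨mem_univ ⟨0, List.length_pos_iff.mpr hl⟩, by simp⟩)⟩

lemma disjoint_circuitHalf (hl : (circuitEdgeList l).Nodup) :
    Disjoint (circuitHalf l true) (circuitHalf l false) := by
  rw [circuitEdgeList_eq_ofFn, List.nodup_ofFn] at hl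
  rw [circuitHalf, circuitHalf, disjoint_image hl, disjoint_filter]
  simp

lemma pairwise_disjoint_circuitHalf {ι : Type*} {L : ι → List V}
    (hnodup : ∀ i, (circuitEdgeList (L i)).Nodup)
    (hdisj : Pairwise fun i j =>
      Disjoint {e | e ∈ circuitEdgeList (L i)} {e | e ∈ circuitEdgeList (L j)}) :
    Pairwise (Disjoint on fun j : ι × Bool => circuitHalf (L j.1) j.2) := by
  rintro ⟨i, b⟩ ⟨i', b'⟩ hne
  by_cases hii' : i = i'
  · subst hii'
    obtain ⟨rfl, rfl⟩ | ⟨rfl, rfl⟩ :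
        b = true ∧ b' = false ∨ b = false ∧ b' = true := by
      cases b <;> cases b' <;> simp_all
    · exact disjoint_circuitHalf (hnodup i)
    · exact (disjoint_circuitHalf (hnodup i)).symm
  · exact disjoint_left.mpr fun e he he' => Set.disjoint_left.mp (hdisj hii')
      (mem_circuitEdgeList_of_mem_circuitHalf he) (mem_circuitEdgeList_of_mem_circuitHalf he')

lemma card_filter_mem_circuitHalf {G : SimpleGraph V} (hl : Even l.length)
    (hadj : ∀ p ∈ l.zip (l.rotate 1), G.Adj p.1 p.2) (hnodup : (circuitEdgeList l).Nodup)
    (v : V) (b : Bool) :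
    #{e ∈ circuitHalf l b | v ∈ e} = #{j : Fin l.length | l[j] = v} := by
  have hinj : Injective (circuitEdge l) := by
    rwa [circuitEdgeList_eq_ofFn, List.nodup_ofFn] at hnodup
  have hmem (j : Fin l.length) : (if v ∈ circuitEdge l j then 1 else 0) =
      (if l[j] = v then 1 else 0) + if l[finRotate _ j] = v then 1 else 0 := by
    have hne : l[j] ≠ l[finRotate _ j] :=
      G.ne_of_adj (mem_edgeSet_of_mem_circuitEdgeList hadj (circuitEdge_mem_circuitEdgeList l j))
    by_cases h₁ : l[j] = v <;> by_cases h₂ : l[finRotate _ j] = v <;>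
      simp_all [circuitEdge, eq_comm]
  rw [card_filter, circuitHalf, sum_image hinj.injOn, sum_congr rfl fun j _ => hmem j,
    sum_add_distrib, sum_filter_even_finRotate hl (fun j => if l[j] = v then 1 else 0),
    sum_filter_add_sum_filter_not, card_filter]

end Circuit

section SubsetProducts

variable {ι α : Type*} [Fintype ι] [DecidableEq ι] [DecidableEq α]

def selectUnion (D : ι × Bool → Finset α) (S : Finset ι) : Finset α :=
  univ.biUnion fun i => D (i, decide (i ∈ S))

variable {D : ι × Bool → Finset α}

lemma selectUnion_subset {A : Finset α} (hDA : ∀ j, D j ⊆ A) (S : Finset ι) :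
    selectUnion D S ⊆ A :=
  biUnion_subset.mpr fun _ _ => hDA _

lemma prod_selectUnion {M : Type*} [CommMonoid M] (hD : Pairwise (Disjoint on D)) (f : α → M)
    (S : Finset ι) :
    ∏ a ∈ selectUnion D S, f a = ∏ i, ∏ a ∈ D (i, decide (i ∈ S)), f a :=
  prod_biUnion fun _ _ _ _ hij => hD fun h => hij (congrArg Prod.fst h)

lemma selectUnion_injective (hD : Pairwise (Disjoint on D))
    (hne : ∀ i, (D (i, true)).Nonempty) : Injective (selectUnion D) := by
  have hsub {S T : Finset ι} (h : selectUnion D S = selectUnion D T) : S ⊆ T := by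
    intro i hiS
    obtain ⟨a, ha⟩ := hne i
    have haS : a ∈ selectUnion D S := mem_biUnion.mpr ⟨i, mem_univ _, by simpa [hiS] using ha⟩
    obtain ⟨j, -, haj⟩ := mem_biUnion.mp (h ▸ haS)
    by_contra hiT
    have hji : (j, decide (j ∈ T)) ≠ (i, true) := by
      intro h
      obtain rfl : j = i := congrArg Prod.fst h
      exact hiT (of_decide_eq_true (congrArg Prod.snd h))
    exact disjoint_left.mp (hD hji) haj ha
  exact fun S T h => (hsub h).antisymm (hsub h.symm)

end SubsetProducts

lemma card_le_of_injective_factorization {α : Type*} [Fintype α] {f : α → ℕ}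
    (hf : Injective f) (hf₀ : ∀ x, f x ≠ 0) (Q : Finset ℕ) (K : ℕ)
    (hK : ∀ x, ∀ p ∈ Q, (f x).factorization p ≤ K)
    (hQ : ∀ x y, ∀ p ∉ Q, (f x).factorization p = (f y).factorization p) :
    Fintype.card α ≤ (K + 1) ^ #Q := by
  let Φ : α → Q → Fin (K + 1) := fun x p =>
    ⟨(f x).factorization p, Nat.lt_succ_of_le (hK x p p.2)⟩
  have hΦ : Injective Φ := by
    refine fun x y h => hf (Nat.factorization_inj (hf₀ x) (hf₀ y) (Finsupp.ext fun p => ?_))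
    by_cases hp : p ∈ Q
    · exact congrArg Fin.val (congrFun h ⟨p, hp⟩)
    · exact hQ x y p hp
  simpa using Fintype.card_le_of_injective Φ hΦ

section PrimeFactorizationGraph

variable {N : ℕ} {A : Finset ℕ}

lemma lt_of_PLM_mul_mul_dvd {a p q r : ℕ} (hp : PLM N p) (hq : PLM N q) (hr : PLM N r)
    (ha : a ≠ 0) (h : p * q * r ∣ a) : N < a := by
  have hcube : ((N : ℝ) ^ ((1 : ℝ) / 3)) ^ 3 = N := by
    rw [one_div, ← Nat.cast_ofNat, Real.rpow_inv_natCast_pow (Nat.cast_nonneg _) (by norm_num)]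
  have h₀ : (0 : ℝ) ≤ (N : ℝ) ^ ((1 : ℝ) / 3) := by positivity
  have hlt : (N : ℝ) < p * q * r := by
    rw [← hcube, pow_three, ← mul_assoc]
    exact mul_lt_mul'' (mul_lt_mul'' hp.2.1 hq.2.1 h₀ h₀) hr.2.1 (by positivity) h₀
  have hle : ((p * q * r : ℕ) : ℝ) ≤ a := by
    exact_mod_cast Nat.le_of_dvd (Nat.pos_of_ne_zero ha) h
  push_cast at hle
  exact_mod_cast hlt.trans_le hle

lemma factorization_eq_one_of_PLM_dvd {a p q : ℕ} (ha : a ∈ Set.Icc 1 N) (hp : PLM N p)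
    (hq : PLM N q) (hpq : p ≠ q) (hpa : p ∣ a) (hqa : q ∣ a) : a.factorization p = 1 := by
  have ha₀ : a ≠ 0 := by have := ha.1; omega
  have hpos : 0 < a.factorization p := hp.1.factorization_pos_of_dvd ha₀ hpa
  by_contra hne
  have hp2 : p ^ 2 ∣ a := (hp.1.pow_dvd_iff_le_factorization ha₀).mpr (by omega)
  have hcop : (p ^ 2).Coprime q := ((Nat.coprime_primes hp.1 hq.1).mpr hpq).pow_left 2
  have := lt_of_PLM_mul_mul_dvd hp hp hq ha₀
    (by rw [← sq]; exact hcop.mul_dvd_of_dvd_of_dvd hp2 hqa)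
  exact absurd ha.2 this.not_ge

lemma factorization_eq_indicator_of_PLM_dvd {a p q r : ℕ} (ha : a ∈ Set.Icc 1 N)
    (hp : PLM N p) (hq : PLM N q) (hpq : p ≠ q) (hpa : p ∣ a) (hqa : q ∣ a) (hr : PLM N r) :
    a.factorization r = if r ∈ s(p, q) then 1 else 0 := by
  have ha₀ : a ≠ 0 := by have := ha.1; omega
  split_ifs with h <;> rw [Sym2.mem_iff] at h
  · obtain rfl | rfl := h
    · exact factorization_eq_one_of_PLM_dvd ha hp hq hpq hpa hqa
    · exact factorization_eq_one_of_PLM_dvd ha hq hp hpq.symm hqa hpa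
  · obtain ⟨hrp, hrq⟩ := not_or.mp h
    by_contra hne
    have hra : r ∣ a := (hr.1.dvd_iff_one_le_factorization ha₀).mpr (by omega)
    have hcop : (p * q).Coprime r := Nat.Coprime.mul_left
      ((Nat.coprime_primes hp.1 hr.1).mpr (Ne.symm hrp))
      ((Nat.coprime_primes hq.1 hr.1).mpr (Ne.symm hrq))
    have := lt_of_PLM_mul_mul_dvd hp hq hr ha₀ (hcop.mul_dvd_of_dvd_of_dvd
      (((Nat.coprime_primes hp.1 hq.1).mpr hpq).mul_dvd_of_dvd_of_dvd hpa hqa) hra)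
    exact absurd ha.2 this.not_ge

lemma factorization_eq_indicator_of_padicValNat {a q : ℕ}
    (hqa : padicValNat q a = 1) (h : ∀ p, PLM N p → p ≠ q → padicValNat p a = 0)
    {r : ℕ} (hr : PLM N r) :
    a.factorization r = if r ∈ s(1, q) then 1 else 0 := by
  rw [Nat.factorization_def a hr.1]
  by_cases hrq : r = q
  · simp [hrq, hqa]
  · simp [h r hr hrq, hrq, hr.1.ne_one]

lemma exists_factorization_eq_indicator (hA : ↑A ⊆ Set.Icc 1 N) {e : Sym2 ℕ}
    (he : e ∈ (pfGraph N A).edgeSet) :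
    ∃ a ∈ A, ∀ p, PLM N p → a.factorization p = if p ∈ e then 1 else 0 := by
  induction e using Sym2.ind with | _ x y =>
  obtain ⟨hxy, ⟨rfl, -, a, ha, hya, h⟩ | ⟨rfl, -, a, ha, hxa, h⟩ |
    ⟨hx, hy, a, ha, hxa, hya⟩⟩ := he
  · exact ⟨a, ha, fun p hp => factorization_eq_indicator_of_padicValNat hya h hp⟩
  · refine ⟨a, ha, fun p hp => ?_⟩
    rw [Sym2.eq_swap]
    exact factorization_eq_indicator_of_padicValNat hxa h hp
  · exact ⟨a, ha, fun p hp =>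
      factorization_eq_indicator_of_PLM_dvd (hA ha) hx hy hxy hxa hya hp⟩

lemma eq_one_or_PLM_of_adj {x y : ℕ} (h : (pfGraph N A).Adj x y) : x = 1 ∨ PLM N x := by
  obtain ⟨-, ⟨hx, -⟩ | ⟨-, hx, -⟩ | ⟨hx, -⟩⟩ := h <;> simp [*]

lemma pfGraph_edge_eq_of_PLM_mem_iff {e e' : Sym2 ℕ} (he : e ∈ (pfGraph N A).edgeSet)
    (he' : e' ∈ (pfGraph N A).edgeSet) (h : ∀ p, PLM N p → (p ∈ e ↔ p ∈ e')) :
    e = e' := by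
  induction e using Sym2.ind with | _ x y =>
  induction e' using Sym2.ind with | _ x' y' =>
  have hx := eq_one_or_PLM_of_adj he
  have hy := eq_one_or_PLM_of_adj he.symm
  have hx' := eq_one_or_PLM_of_adj he'
  have hy' := eq_one_or_PLM_of_adj he'.symm
  have hxy : x ≠ y := (pfGraph N A).ne_of_adj he
  have hxy' : x' ≠ y' := (pfGraph N A).ne_of_adj he'
  have h1 : ∀ p, PLM N p → p ≠ 1 := fun p hp => hp.1.ne_one
  simp only [Sym2.mem_iff] at h
  grind [Sym2.eq_iff]

lemma exists_injOn_edge_label (hA : ↑A ⊆ Set.Icc 1 N) :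
    ∃ w : Sym2 ℕ → ℕ, Set.InjOn w (pfGraph N A).edgeSet ∧ ∀ e ∈ (pfGraph N A).edgeSet,
      w e ∈ A ∧ ∀ p, PLM N p → (w e).factorization p = if p ∈ e then 1 else 0 := by
  have (e : Sym2 ℕ) : ∃ a, e ∈ (pfGraph N A).edgeSet →
      a ∈ A ∧ ∀ p, PLM N p → a.factorization p = if p ∈ e then 1 else 0 := by
    by_cases he : e ∈ (pfGraph N A).edgeSet
    · obtain ⟨a, ha, h⟩ := exists_factorization_eq_indicator hA he
      exact ⟨a, fun _ => ⟨ha, h⟩⟩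
    · exact ⟨0, fun h => absurd h he⟩
  choose w hw using this
  refine ⟨w, fun e he e' he' hee' => pfGraph_edge_eq_of_PLM_mem_iff he he' fun p hp => ?_, hw⟩
  have h := (hw e he).2 p hp
  rw [hee', (hw e' he').2 p hp] at h
  split_ifs at h <;> simp_all

end PrimeFactorizationGraph

section Counting

variable {N : ℕ} {A : Finset ℕ} {ι : Type*} [Fintype ι] [DecidableEq ι]

lemma factorization_prod_eq_sum (hA : ↑A ⊆ Set.Icc 1 N) {B : Finset ℕ} (hB : B ⊆ A)
    (p : ℕ) :
    (∏ a ∈ B, a).factorization p = ∑ a ∈ B, a.factorization p := by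
  rw [Nat.factorization_prod fun a ha => by have := (hA (hB ha)).1; omega,
    Finsupp.finsetSum_apply]

lemma factorization_prod_le (hA : ↑A ⊆ Set.Icc 1 N) {B : Finset ℕ} (hB : B ⊆ A) (p : ℕ) :
    (∏ a ∈ B, a).factorization p ≤ N * N := calc
  (∏ a ∈ B, a).factorization p = ∑ a ∈ B, a.factorization p :=
    factorization_prod_eq_sum hA hB p
  _ ≤ ∑ a ∈ A, a.factorization p := sum_le_sum_of_subset hB
  _ ≤ ∑ _a ∈ A, N := sum_le_sum fun a ha =>
    ((Nat.factorization_lt p (by have := (hA ha).1; omega)).trans_le (hA ha).2).le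
  _ ≤ N * N := by
    rw [sum_const, smul_eq_mul]
    gcongr
    simpa using card_le_card (show A ⊆ Icc 1 N from fun a ha => by simpa using hA ha)

lemma factorization_prod_eq_zero_of_lt (hA : ↑A ⊆ Set.Icc 1 N) {B : Finset ℕ} (hB : B ⊆ A)
    {p : ℕ} (hp : N < p) : (∏ a ∈ B, a).factorization p = 0 := by
  rw [factorization_prod_eq_sum hA hB]
  exact sum_eq_zero fun a ha => Nat.factorization_eq_zero_of_lt ((hA (hB ha)).2.trans_lt hp)

lemma PLM_of_not_mem_Icc_floor {p : ℕ} (hp : p.Prime) (hpN : p ≤ N)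
    (h : p ∉ Icc 1 ⌊(N : ℝ) ^ ((1 : ℝ) / 3)⌋₊) : PLM N p := by
  refine ⟨hp, (Nat.floor_lt (by positivity)).mp ?_, hpN⟩
  simp only [mem_Icc, not_and_or, not_le] at h
  have := hp.one_lt
  omega

lemma two_pow_le_of_balanced (hA : ↑A ⊆ Set.Icc 1 N) (hDSP : DistinctSubsetProds ↑A)
    {D : ι × Bool → Finset ℕ} (hDA : ∀ j, D j ⊆ A) (hD : Pairwise (Disjoint on D))
    (hne : ∀ i, (D (i, true)).Nonempty)
    (hbal : ∀ i p, PLM N p →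
      (∏ a ∈ D (i, true), a).factorization p = (∏ a ∈ D (i, false), a).factorization p) :
    2 ^ Fintype.card ι ≤ (N * N + 1) ^ ⌊(N : ℝ) ^ ((1 : ℝ) / 3)⌋₊ := by
  have hUA := selectUnion_subset hDA
  have hf : Injective fun S => ∏ a ∈ selectUnion D S, a := fun S T h =>
    selectUnion_injective hD hne (hDSP _ _ (coe_subset.mpr (hUA S)) (coe_subset.mpr (hUA T)) h)
  have hf₀ (S : Finset ι) : ∏ a ∈ selectUnion D S, a ≠ 0 :=
    prod_ne_zero_iff.mpr fun a ha => by have := (hA (hUA S ha)).1; omega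
  have hPLM (S : Finset ι) {p : ℕ} (hp : PLM N p) :
      (∏ a ∈ selectUnion D S, a).factorization p =
        ∑ i, (∏ a ∈ D (i, true), a).factorization p := by
    rw [prod_selectUnion hD, Nat.factorization_prod fun i _ => ?_, Finsupp.finsetSum_apply]
    · refine sum_congr rfl fun i _ => ?_
      cases decide (i ∈ S)
      · exact (hbal i p hp).symm
      · rfl
    · exact prod_ne_zero_iff.mpr fun a ha => by have := (hA (hDA _ ha)).1; omega
  have hQ (S T : Finset ι) (p : ℕ) (hp : p ∉ Icc 1 ⌊(N : ℝ) ^ ((1 : ℝ) / 3)⌋₊) :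
      (∏ a ∈ selectUnion D S, a).factorization p =
        (∏ a ∈ selectUnion D T, a).factorization p := by
    by_cases hprime : p.Prime
    swap
    · simp [Nat.factorization_eq_zero_of_not_prime _ hprime]
    by_cases hpN : N < p
    · rw [factorization_prod_eq_zero_of_lt hA (hUA S) hpN,
        factorization_prod_eq_zero_of_lt hA (hUA T) hpN]
    have hp' := PLM_of_not_mem_Icc_floor hprime (not_lt.mp hpN) hp
    rw [hPLM S hp', hPLM T hp']
  have hcard := card_le_of_injective_factorization hf hf₀ _ (N * N)
    (fun S p _ => factorization_prod_le hA (hUA S) p) hQ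
  rwa [Fintype.card_finset, Nat.card_Icc, Nat.add_sub_cancel] at hcard

lemma two_pow_le_of_balanced_edges (hA : ↑A ⊆ Set.Icc 1 N) (hDSP : DistinctSubsetProds ↑A)
    {E : ι × Bool → Finset (Sym2 ℕ)} (hE : ∀ j, ↑(E j) ⊆ (pfGraph N A).edgeSet)
    (hdisj : Pairwise (Disjoint on E)) (hne : ∀ i, (E (i, true)).Nonempty)
    (hbal : ∀ i v, #{e ∈ E (i, true) | v ∈ e} = #{e ∈ E (i, false) | v ∈ e}) :
    2 ^ Fintype.card ι ≤ (N * N + 1) ^ ⌊(N : ℝ) ^ ((1 : ℝ) / 3)⌋₊ := by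
  obtain ⟨w, hw_inj, hw⟩ := exists_injOn_edge_label hA
  have hinj (j : ι × Bool) : Set.InjOn w (E j) := hw_inj.mono (hE j)
  refine two_pow_le_of_balanced hA hDSP (D := fun j => (E j).image w)
    (fun j a ha => ?_) (fun j j' hjj' => ?_) (fun i => (hne i).image w) (fun i p hp => ?_)
  · obtain ⟨e, he, rfl⟩ := mem_image.mp ha
    exact (hw e (hE j he)).1
  · refine disjoint_left.mpr fun a ha ha' => ?_
    obtain ⟨e, he, rfl⟩ := mem_image.mp ha
    obtain ⟨e', he', hee'⟩ := mem_image.mp ha'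
    rw [hw_inj (hE j' he') (hE j he) hee'] at he'
    exact disjoint_left.mp (hdisj hjj') he he'
  · have hval (b : Bool) :
        (∏ a ∈ (E (i, b)).image w, a).factorization p = #{e ∈ E (i, b) | p ∈ e} := by
      rw [prod_image (hinj _), Nat.factorization_prod fun e he => ?_, Finsupp.finsetSum_apply,
        card_filter]
      · exact sum_congr rfl fun e he => (hw e (hE _ he)).2 p hp
      · have := (hA (hw e (hE _ he)).1).1; omega
    rw [hval, hval, hbal]

end Counting

lemma natCast_le_of_two_pow_le {ε : ℝ} (hε : 0 < ε) {n N : ℕ}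
    (h : 2 ^ n ≤ (N * N + 1) ^ ⌊(N : ℝ) ^ ((1 : ℝ) / 3)⌋₊) :
    (n : ℝ) ≤ (1 + 3 / ε) * (N : ℝ) ^ ((1 : ℝ) / 3 + ε) := by
  set m := ⌊(N : ℝ) ^ ((1 : ℝ) / 3)⌋₊
  rcases Nat.eq_zero_or_pos N with rfl | hN
  · have hm : m = 0 := by simp [m]
    rw [hm, pow_zero] at h
    obtain rfl : n = 0 := by_contra fun hn => (Nat.one_lt_two_pow hn).not_ge h
    simp only [Nat.cast_zero]
    positivity
  have hN₁ : (1 : ℝ) ≤ N := by exact_mod_cast hN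
  have hlogN : 0 ≤ Real.log N := Real.log_nonneg hN₁
  have hm : (m : ℝ) ≤ (N : ℝ) ^ ((1 : ℝ) / 3) := Nat.floor_le (by positivity)
  have hlog : n * Real.log 2 ≤ m * (Real.log 2 + 2 * Real.log N) := calc
    n * Real.log 2 = Real.log ((2 : ℝ) ^ n) := by rw [Real.log_pow]
    _ ≤ Real.log (((N : ℝ) * N + 1) ^ m) :=
      Real.log_le_log (by positivity) (by exact_mod_cast h)
    _ = m * Real.log ((N : ℝ) * N + 1) := by rw [Real.log_pow]
    _ ≤ m * Real.log (2 * N * N) := by gcongr; nlinarith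
    _ = m * (Real.log 2 + 2 * Real.log N) := by
      rw [Real.log_mul (by positivity) (by positivity),
        Real.log_mul (by positivity) (by positivity)]
      ring
  have hn : (n : ℝ) ≤ m * (1 + 3 * Real.log N) := by
    have := Real.log_two_gt_d9
    nlinarith [mul_nonneg (Nat.cast_nonneg m) hlogN]
  have hε_le : Real.log N ≤ (N : ℝ) ^ ε / ε := Real.log_le_rpow_div (Nat.cast_nonneg N) hε
  have hNε : 1 ≤ (N : ℝ) ^ ε := Real.one_le_rpow hN₁ hε.le
  calc (n : ℝ) ≤ m * (1 + 3 * Real.log N) := hn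
    _ ≤ (N : ℝ) ^ ((1 : ℝ) / 3) * ((N : ℝ) ^ ε * (1 + 3 / ε)) := by
      gcongr
      calc 1 + 3 * Real.log N ≤ (N : ℝ) ^ ε + 3 * ((N : ℝ) ^ ε / ε) := by gcongr
        _ = (N : ℝ) ^ ε * (1 + 3 / ε) := by ring
    _ = (1 + 3 / ε) * (N : ℝ) ^ ((1 : ℝ) / 3 + ε) := by
      rw [Real.rpow_add (by positivity)]; ring

/-- If `C_1, …, C_n` are edge sets of pairwise edge-disjoint even circuits of length at
most `2·N^{1/12}` in the prime factorization graph of `A`, then `n ≤ C·N^{1/3+ε}`. -/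
theorem stmt9 : ∀ ε : ℝ, 0 < ε → ∃ C : ℝ, 0 < C ∧
    ∀ N : ℕ, ∀ A : Finset ℕ, ↑A ⊆ Set.Icc 1 N → DistinctSubsetProds ↑A →
    (∀ a ∈ A, ∀ b ∈ A, (∀ p : ℕ, PLM N p → padicValNat p a = padicValNat p b) → a = b) →
    (∀ a ∈ A, ∃ p : ℕ, PLM N p ∧ p ∣ a) →
    ∀ n : ℕ, ∀ Cs : Fin n → Set (Sym2 ℕ), ∀ k : Fin n → ℕ,
    (∀ i, IsCircuit (pfGraph N A) (k i) (Cs i)) →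
    (∀ i, Even (k i)) →
    (∀ i, (k i : ℝ) ≤ 2 * (N : ℝ) ^ ((1 : ℝ) / 12)) →
    (∀ i j, i ≠ j → Disjoint (Cs i) (Cs j)) →
    (n : ℝ) ≤ C * (N : ℝ) ^ ((1 : ℝ) / 3 + ε) := by
  intro ε hε
  refine ⟨1 + 3 / ε, by positivity, ?_⟩
  intro N A hA hDSP _ _ n Cs k hcirc heven _ hdisj
  choose L hlen hne hadj hnodup hCs using hcirc
  have hdisj' : Pairwise fun i j =>
      Disjoint {e | e ∈ circuitEdgeList (L i)} {e | e ∈ circuitEdgeList (L j)} :=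
    fun i j hij => by simpa only [hCs] using hdisj i j hij
  have hbal (i : Fin n) (v : ℕ) :
      #{e ∈ circuitHalf (L i) true | v ∈ e} = #{e ∈ circuitHalf (L i) false | v ∈ e} := by
    have heven' : Even (L i).length := hlen i ▸ heven i
    rw [card_filter_mem_circuitHalf heven' (hadj i) (hnodup i),
      card_filter_mem_circuitHalf heven' (hadj i) (hnodup i)]
  refine natCast_le_of_two_pow_le hε ?_
  simpa using two_pow_le_of_balanced_edges hA hDSP
    (E := fun j : Fin n × Bool => circuitHalf (L j.1) j.2)
    (fun j _ he => mem_edgeSet_of_mem_circuitEdgeList (hadj j.1)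
      (mem_circuitEdgeList_of_mem_circuitHalf he))
    (pairwise_disjoint_circuitHalf hnodup hdisj') (fun i => circuitHalf_true_nonempty (hne i)) hbal
end
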